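/- Let U ⊆ ℝ⁴ be open and let u : U → ℝ be three times continuously differentiable. Then at every point of U one has the pointwise divergence identity σ₂(A_u) = −(1/2)·∑_{i=1}^{4} ∂ᵢ( ∑_{j=1}^{4} (−Δu·δᵢⱼ + ∂ᵢ∂ⱼu − ∂ᵢu·∂ⱼu)·∂ⱼu ), i.e. σ₂(A_u) equals −1/2 times the divergence of the vector field V with components Vᵢ = ∑_j (−Δu·δᵢⱼ + ∂ᵢ∂ⱼu − ∂ᵢu·∂ⱼu)·∂ⱼu. -/

import Mathlib

open MeasureTheory Filter Topology Asymptotics Finset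
open scoped ENNReal NNReal

noncomputable section

/-- Identify `ℝ⁴` with `EuclideanSpace ℝ (Fin 4)`. -/
abbrev E4 : Type := EuclideanSpace ℝ (Fin 4)

/-- Partial derivative `∂ᵢ f` in the `i`-th coordinate direction. -/
def pd (i : Fin 4) (f : E4 → ℝ) (x : E4) : ℝ :=
  fderiv ℝ f x (EuclideanSpace.single i 1)

/-- `σ₁(M) = tr M`. -/
def sigma1 {n : ℕ} (M : Matrix (Fin n) (Fin n) ℝ) : ℝ := M.trace

/-- `σ₂(M) = ((tr M)² − tr (M²))/2`. -/
def sigma2 {n : ℕ} (M : Matrix (Fin n) (Fin n) ℝ) : ℝ :=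
  (M.trace ^ 2 - (M * M).trace) / 2

/-- The conformal Schouten matrix of `u`:
`(A_u)_{ij} = −∂ᵢ∂ⱼu + ∂ᵢu ∂ⱼu − (1/2)|∇u|² δᵢⱼ`. -/
def schouten (u : E4 → ℝ) (x : E4) : Matrix (Fin 4) (Fin 4) ℝ :=
  Matrix.of fun i j =>
    -(pd i (pd j u) x) + pd i u x * pd j u x
      - (1 / 2) * (∑ k, pd k u x ^ 2) * (if i = j then 1 else 0)

/-- The Euclidean Laplacian `Δu = ∑ᵢ ∂ᵢ∂ᵢu`. -/
def lap (u : E4 → ℝ) (x : E4) : ℝ := ∑ i, pd i (pd i u) x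

/-!
Write `A_u = -∇²u + ∇u ∇uᵀ - ½|∇u|² I`. The rank-one update and scalar shift formulas for `σ₂`
give `σ₂(A_u) = σ₂(∇²u) + ½ Δu |∇u|² + ⟨∇²u ∇u, ∇u⟩`; the `|∇u|⁴` terms cancel exactly because
the dimension is `4`. On the other side, expanding `∂ᵢVᵢ` by the product rule, the third-order
terms `∑ᵢⱼ ∂ᵢ∂ᵢ∂ⱼu ∂ⱼu - ∑ⱼ ∂ⱼΔu ∂ⱼu` cancel because partial derivatives of a `C³` function commute,
and what remains is `-2` times the same quadratic expression in `∇u` and `∇²u`.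
-/

open Matrix

namespace Matrix

variable {n : ℕ}

theorem sigma2_neg (M : Matrix (Fin n) (Fin n) ℝ) : sigma2 (-M) = sigma2 M := by
  simp [sigma2]

theorem sigma2_add_vecMulVec (M : Matrix (Fin n) (Fin n) ℝ) (g : Fin n → ℝ) :
    sigma2 (M + vecMulVec g g) = sigma2 M + M.trace * (g ⬝ᵥ g) - g ⬝ᵥ M *ᵥ g := by
  simp only [sigma2, add_mul, mul_add, trace_add, trace_vecMulVec, vecMulVec_mul_vecMulVec]
  rw [trace_mul_comm (vecMulVec g g) M, mul_vecMulVec]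
  simp only [trace_vecMulVec, dotProduct_smul, smul_eq_mul, dotProduct_comm (M *ᵥ g)]
  ring

theorem sigma2_sub_smul_one (M : Matrix (Fin n) (Fin n) ℝ) (c : ℝ) :
    sigma2 (M - c • 1) = sigma2 M - (n - 1) * c * M.trace + n * (n - 1) / 2 * c ^ 2 := by
  simp only [sigma2, sub_mul, mul_sub, trace_sub, trace_smul, trace_one, smul_mul, Matrix.one_mul,
    Fintype.card_fin, smul_eq_mul, Algebra.mul_smul_comm, Matrix.mul_one]
  ring

/-- The terms of `∑ᵢ ∂ᵢVᵢ` free of third derivatives, with `H = ∇²u` and `g = ∇u`. -/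
theorem sum_sum_secondOrder {ι : Type*} [Fintype ι] [DecidableEq ι] (H : Matrix ι ι ℝ)
    (hH : H.IsSymm) (g : ι → ℝ) :
    ∑ i, ∑ j, ((-(H i i * g j) - g i * H i j) * g j
        + (-H.trace * (if i = j then 1 else 0) + H i j - g i * g j) * H i j)
      = (H * H).trace - H.trace ^ 2 - H.trace * (g ⬝ᵥ g) - 2 * (g ⬝ᵥ H *ᵥ g) := by
  have hHH : (H * H).trace = ∑ i, ∑ j, H i j * H i j := by
    simp [trace, mul_apply, hH.apply]
  have hq : g ⬝ᵥ H *ᵥ g = ∑ i, ∑ j, g i * H i j * g j := by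
    simp [dotProduct, mulVec, mul_sum, mul_assoc]
  have hts : H.trace * (g ⬝ᵥ g) = ∑ i, ∑ j, H i i * g j * g j := by
    simp [trace, dotProduct, sum_mul_sum, mul_assoc]
  have htt : H.trace ^ 2 = ∑ i, ∑ j, H.trace * (if i = j then 1 else 0) * H i j := by
    simp [sq, mul_sum, trace]
  rw [hHH, hq, hts, htt, mul_sum, ← sum_sub_distrib, ← sum_sub_distrib, ← sum_sub_distrib]
  refine sum_congr rfl fun i _ => ?_
  rw [mul_sum, ← sum_sub_distrib, ← sum_sub_distrib, ← sum_sub_distrib]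
  refine sum_congr rfl fun j _ => ?_
  ring

end Matrix

section Calculus

variable {f g : E4 → ℝ} {x : E4}

theorem pd_congr (h : f =ᶠ[𝓝 x] g) (i : Fin 4) : pd i f x = pd i g x := by
  rw [pd, pd, h.fderiv_eq]

theorem pd_add (hf : DifferentiableAt ℝ f x) (hg : DifferentiableAt ℝ g x) (i : Fin 4) :
    pd i (fun y => f y + g y) x = pd i f x + pd i g x := by
  simp [pd, fderiv_fun_add hf hg]

theorem pd_sub (hf : DifferentiableAt ℝ f x) (hg : DifferentiableAt ℝ g x) (i : Fin 4) :
    pd i (fun y => f y - g y) x = pd i f x - pd i g x := by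
  simp [pd, fderiv_fun_sub hf hg]

theorem pd_mul (hf : DifferentiableAt ℝ f x) (hg : DifferentiableAt ℝ g x) (i : Fin 4) :
    pd i (fun y => f y * g y) x = pd i f x * g x + f x * pd i g x := by
  simp [pd, fderiv_fun_mul hf hg, add_comm, mul_comm]

theorem pd_neg (i : Fin 4) : pd i (fun y => -f y) x = -pd i f x := by
  simp [pd, fderiv_fun_neg]

theorem pd_mul_const (hf : DifferentiableAt ℝ f x) (c : ℝ) (i : Fin 4) :
    pd i (fun y => f y * c) x = pd i f x * c := by
  rw [pd, fderiv_mul_const hf]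
  simp [pd, mul_comm]

theorem pd_sum {ι : Type*} (s : Finset ι) {F : ι → E4 → ℝ}
    (hF : ∀ j ∈ s, DifferentiableAt ℝ (F j) x) (i : Fin 4) :
    pd i (fun y => ∑ j ∈ s, F j y) x = ∑ j ∈ s, pd i (F j) x := by
  simp [pd, fderiv_fun_sum hF]

theorem ContDiffAt.pd {m : WithTop ℕ∞} (hf : ContDiffAt ℝ (m + 1) f x) (i : Fin 4) :
    ContDiffAt ℝ m (pd i f) x := by
  exact (ContinuousLinearMap.apply ℝ ℝ (EuclideanSpace.single i 1)).contDiff.contDiffAt.comp x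
    (hf.fderiv_right le_rfl)

theorem pd_pd_eq_fderiv_fderiv (hf : ContDiffAt ℝ 2 f x) (i j : Fin 4) :
    pd i (pd j f) x =
      fderiv ℝ (fderiv ℝ f) x (EuclideanSpace.single i 1) (EuclideanSpace.single j 1) := by
  have hdf : DifferentiableAt ℝ (fderiv ℝ f) x :=
    (hf.fderiv_right (m := 1) le_rfl).differentiableAt one_ne_zero
  change fderiv ℝ (fun y => fderiv ℝ f y (EuclideanSpace.single j 1)) x _ = _
  simp [fderiv_clm_apply hdf (differentiableAt_const _)]

theorem pd_comm (hf : ContDiffAt ℝ 2 f x) (i j : Fin 4) : pd i (pd j f) x = pd j (pd i f) x := by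
  rw [pd_pd_eq_fderiv_fderiv hf, pd_pd_eq_fderiv_fderiv hf]
  exact hf.isSymmSndFDerivAt (by simp) _ _

end Calculus

def grad (u : E4 → ℝ) (x : E4) : Fin 4 → ℝ := fun i => pd i u x

def hessian (u : E4 → ℝ) (x : E4) : Matrix (Fin 4) (Fin 4) ℝ :=
  of fun i j => pd i (pd j u) x

def sigma2Flux (u : E4 → ℝ) (i : Fin 4) : E4 → ℝ := fun y =>
  ∑ j, (-(lap u y) * (if i = j then (1 : ℝ) else 0) + pd i (pd j u) y
    - pd i u y * pd j u y) * pd j u y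

section Conformal

variable {u : E4 → ℝ} {x : E4}

theorem trace_hessian : (hessian u x).trace = lap u x := rfl

theorem hessian_isSymm (hu : ContDiffAt ℝ 2 u x) : (hessian u x).IsSymm :=
  IsSymm.ext fun i j => pd_comm hu j i

theorem schouten_eq : schouten u x = -hessian u x + vecMulVec (grad u x) (grad u x)
    - ((grad u x ⬝ᵥ grad u x) / 2) • 1 := by
  ext i j
  simp only [schouten, one_div, sq, mul_ite, mul_one, mul_zero, of_apply, hessian, neg_of,
    dotProduct, grad, Matrix.sub_apply, Matrix.add_apply, Pi.neg_apply, vecMulVec_apply,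
    Matrix.smul_apply, one_apply, smul_eq_mul, sub_right_inj]
  split_ifs <;> ring

theorem pd_lap (hu : ContDiffAt ℝ 3 u x) (j : Fin 4) : pd j (lap u) x = lap (pd j u) x := by
  have hpd_comm : ∀ k, pd j (pd k u) =ᶠ[𝓝 x] pd k (pd j u) := fun k =>
    (hu.eventually (by simp)).mono fun y hy => pd_comm (hy.of_le (by norm_num)) j k
  have hC2 : ∀ k, ContDiffAt ℝ 2 (pd k u) x := fun k => hu.pd (m := 2) k
  calc pd j (lap u) x = ∑ k, pd j (pd k (pd k u)) x :=
        pd_sum _ (fun k _ => ((hC2 k).pd (m := 1) k).differentiableAt one_ne_zero) j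
    _ = ∑ k, pd k (pd j (pd k u)) x := sum_congr rfl fun k _ => pd_comm (hC2 k) j k
    _ = lap (pd j u) x := sum_congr rfl fun k _ => pd_congr (hpd_comm k) k

theorem pd_sigma2Flux (hu : ContDiffAt ℝ 3 u x) (i : Fin 4) :
    pd i (sigma2Flux u i) x = ∑ j,
      ((pd i (pd i (pd j u)) x - pd i (lap u) x * (if i = j then 1 else 0)) * pd j u x
        + ((-(pd i (pd i u) x * pd j u x) - pd i u x * pd i (pd j u) x) * pd j u x
          + (-(lap u x) * (if i = j then 1 else 0) + pd i (pd j u) x - pd i u x * pd j u x)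
            * pd i (pd j u) x)) := by
  have d1 : ∀ a, DifferentiableAt ℝ (pd a u) x := fun a =>
    (hu.pd (m := 2) a).differentiableAt two_ne_zero
  have d2 : ∀ a b, DifferentiableAt ℝ (pd a (pd b u)) x := fun a b =>
    ((hu.pd (m := 2) b).pd (m := 1) a).differentiableAt one_ne_zero
  have dlap : DifferentiableAt ℝ (lap u) x := DifferentiableAt.fun_sum fun k _ => d2 k k
  have dcoeff : ∀ j, DifferentiableAt ℝ (fun y => -(lap u y) * (if i = j then (1 : ℝ) else 0)
      + pd i (pd j u) y - pd i u y * pd j u y) x := fun j =>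
    ((dlap.neg.mul_const _).add (d2 i j)).sub ((d1 i).mul (d1 j))
  unfold sigma2Flux
  rw [pd_sum _ (fun j _ => (dcoeff j).fun_mul (d1 j))]
  refine sum_congr rfl fun j _ => ?_
  have dlap_mul : DifferentiableAt ℝ (fun y => -lap u y * (if i = j then (1 : ℝ) else 0)) x :=
    dlap.fun_neg.mul_const _
  rw [pd_mul (dcoeff j) (d1 j), pd_sub (dlap_mul.fun_add (d2 i j)) ((d1 i).fun_mul (d1 j)),
    pd_add dlap_mul (d2 i j), pd_mul_const dlap.fun_neg, pd_neg, pd_mul (d1 i) (d1 j)]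
  ring

theorem sum_pd_sigma2Flux (hu : ContDiffAt ℝ 3 u x) :
    ∑ i, pd i (sigma2Flux u i) x = (hessian u x * hessian u x).trace - lap u x ^ 2
      - lap u x * (grad u x ⬝ᵥ grad u x) - 2 * (grad u x ⬝ᵥ hessian u x *ᵥ grad u x) := by
  have hthird : ∑ i, ∑ j, (pd i (pd i (pd j u)) x - pd i (lap u) x * (if i = j then 1 else 0))
      * pd j u x = 0 := by
    rw [sum_comm]
    refine sum_eq_zero fun j _ => ?_
    simp only [sub_mul, sum_sub_distrib, mul_ite, mul_one, mul_zero, ite_mul, zero_mul,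
      sum_ite_eq', mem_univ, if_true]
    rw [pd_lap hu, lap, sum_mul, sub_self]
  rw [sum_congr rfl fun i _ => (pd_sigma2Flux hu i).trans sum_add_distrib, sum_add_distrib,
    hthird, zero_add]
  exact sum_sum_secondOrder _ (hessian_isSymm (hu.of_le (by norm_num))) _

end Conformal

/-- the pointwise divergence identity
`σ₂(A_u) = −(1/2) ∑ᵢ ∂ᵢ( ∑ⱼ (−Δu δᵢⱼ + ∂ᵢ∂ⱼu − ∂ᵢu ∂ⱼu) ∂ⱼu )`
for a `C³` function `u` on an open set `U ⊆ ℝ⁴`. -/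
theorem sigma2_divergence_identity (U : Set E4) (hU : IsOpen U) (u : E4 → ℝ)
    (hu : ContDiffOn ℝ 3 u U) (x : E4) (hx : x ∈ U) :
    sigma2 (schouten u x) =
      -(1 / 2) * ∑ i, pd i (fun y => ∑ j,
        (-(lap u y) * (if i = j then (1 : ℝ) else 0) + pd i (pd j u) y
          - pd i u y * pd j u y) * pd j u y) x := by
  have hux : ContDiffAt ℝ 3 u x := hu.contDiffAt (hU.mem_nhds hx)
  change _ = -(1 / 2) * ∑ i, pd i (sigma2Flux u i) x
  rw [sum_pd_sigma2Flux hux, schouten_eq, sigma2_sub_smul_one, sigma2_add_vecMulVec,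
    sigma2_neg, trace_add, trace_neg, trace_vecMulVec, trace_hessian, neg_mulVec,
    dotProduct_neg, sigma2, trace_hessian]
  push_cast
  ring
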